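/- If S has γ-rectangular Apéry set, then S is M-pure symmetric; that is, for every ω ∈ Ap(S) we have ω ⪯_M f + m (there exists u ∈ S with ω + u = f + m and ord(ω) + ord(u) = ord(f + m)). -/

import Mathlib

open Finset

/-- `S` is a numerical semigroup: a submonoid of `(ℕ, +)` with finite complement. -/
def IsNumSgp (S : Set ℕ) : Prop :=
  0 ∈ S ∧ (∀ a ∈ S, ∀ b ∈ S, a + b ∈ S) ∧ (Sᶜ : Set ℕ).Finite

/-- `s` belongs to the Apéry set of `S` with respect to `m`:
`s ∈ S` and `s - m ∉ S` (i.e. no `u ∈ S` with `u + m = s`). -/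
def InApery (S : Set ℕ) (m s : ℕ) : Prop :=
  s ∈ S ∧ ∀ u ∈ S, u + m ≠ s

def AperySet (S : Set ℕ) (m : ℕ) : Set ℕ := {s | InApery S m s}

/-- `ordS S s` is the largest `h` such that `s` is a sum of `h` nonzero elements of `S`. -/
noncomputable def ordS (S : Set ℕ) (s : ℕ) : ℕ :=
  sSup {h : ℕ | ∃ f : Fin h → ℕ, (∀ j, f j ∈ S ∧ f j ≠ 0) ∧ ∑ j, f j = s}

/-- `g` generates `S`. -/
def Generates (S : Set ℕ) {ν : ℕ} (g : Fin ν → ℕ) : Prop :=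
  ∀ s, s ∈ S ↔ ∃ lam : Fin ν → ℕ, ∑ i, lam i * g i = s

/-- `g` is a minimal generating system of `S`: it generates `S`
and no `g i` is generated by the remaining generators. -/
def MinimalGen (S : Set ℕ) {ν : ℕ} (g : Fin ν → ℕ) : Prop :=
  Generates S g ∧ ∀ i, ¬ ∃ lam : Fin ν → ℕ, lam i = 0 ∧ ∑ j, lam j * g j = g i

/-- `lam` is a maximal representation of `s`: the coefficient sum equals `ordS S s`. -/
def IsMaxRep (S : Set ℕ) {ν : ℕ} (g : Fin ν → ℕ) (lam : Fin ν → ℕ) (s : ℕ) : Prop :=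
  ∑ i, lam i * g i = s ∧ ∑ i, lam i = ordS S s

/-- `s` has a unique maximal representation. -/
def UniqueMaxRep (S : Set ℕ) {ν : ℕ} (g : Fin ν → ℕ) (s : ℕ) : Prop :=
  ∃! lam : Fin ν → ℕ, IsMaxRep S g lam s

/-- `β_i = max {h | h g_i ∈ Ap(S) and ord(h g_i) = h}`. -/
noncomputable def betaN (S : Set ℕ) (m : ℕ) {ν : ℕ} (g : Fin ν → ℕ) (i : Fin ν) : ℕ :=
  sSup {h : ℕ | InApery S m (h * g i) ∧ ordS S (h * g i) = h}

/-- `γ_i = max {h | h g_i ∈ Ap(S), ord(h g_i) = h and h g_i has a unique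
maximal representation}`. -/
noncomputable def gammaN (S : Set ℕ) (m : ℕ) {ν : ℕ} (g : Fin ν → ℕ) (i : Fin ν) : ℕ :=
  sSup {h : ℕ | InApery S m (h * g i) ∧ ordS S (h * g i) = h ∧ UniqueMaxRep S g (h * g i)}

/-- `B = {Σ_{i≥2} λ_i g_i : 0 ≤ λ_i ≤ β_i}`. -/
def Bset (S : Set ℕ) (m : ℕ) {ν : ℕ} [NeZero ν] (g : Fin ν → ℕ) : Set ℕ :=
  {s | ∃ lam : Fin ν → ℕ, lam 0 = 0 ∧ (∀ i, lam i ≤ betaN S m g i) ∧ ∑ i, lam i * g i = s}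

/-- `Γ = {Σ_{i≥2} λ_i g_i : 0 ≤ λ_i ≤ γ_i}`. -/
def GammaSet (S : Set ℕ) (m : ℕ) {ν : ℕ} [NeZero ν] (g : Fin ν → ℕ) : Set ℕ :=
  {s | ∃ lam : Fin ν → ℕ, lam 0 = 0 ∧ (∀ i, lam i ≤ gammaN S m g i) ∧ ∑ i, lam i * g i = s}

/-- `s ⪯_M t`. -/
def predM (S : Set ℕ) (s t : ℕ) : Prop :=
  ∃ u ∈ S, s + u = t ∧ ordS S s + ordS S u = ordS S t

/-!
Among the maximal representations of an Apéry element `t`, take one, `μ`, maximising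
`Σ μ_i g_i²`. Exchanging the summand `μ_i g_i` of `t` for another representation of it shows
that `μ_i g_i` has order `μ_i` (otherwise the representation of `t` could be lengthened) and that
its only maximal representation is `μ_i e_i` (otherwise `Σ μ_i g_i²` would grow strictly, since
`Σ ν_j g_j² - c g_i² = Σ ν_j (g_j - g_i)²` whenever `Σ ν_j = c` and `Σ ν_j g_j = c g_i`).
As a summand of `t`, `μ_i g_i` lies in `Ap(S)`, so `μ_i ≤ γ_i` and `ord t ≤ Σ γ_i`.
For `t = f + m = Σ γ_i g_i` this squeezes `ord ω + ord (f + m - ω)` between `Σ γ_i` and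
`ord (f + m)` for every `ω = Σ λ_i g_i` with `λ ≤ γ`.
-/

open Function

section Order

variable {S : Set ℕ}

def ordSet (S : Set ℕ) (s : ℕ) : Set ℕ :=
  {h : ℕ | ∃ f : Fin h → ℕ, (∀ j, f j ∈ S ∧ f j ≠ 0) ∧ ∑ j, f j = s}

theorem ordSet_bddAbove (S : Set ℕ) (s : ℕ) : BddAbove (ordSet S s) := by
  refine ⟨s, fun h ⟨f, hf, hsum⟩ => ?_⟩
  calc h = ∑ _j : Fin h, 1 := by simp
    _ ≤ ∑ j, f j := sum_le_sum fun j _ => Nat.one_le_iff_ne_zero.2 (hf j).2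
    _ = s := hsum

theorem le_ordS {h s : ℕ} (hh : h ∈ ordSet S s) : h ≤ ordS S s :=
  le_csSup (ordSet_bddAbove S s) hh

theorem ordS_mem_ordSet {s : ℕ} (hs : s ∈ S) : ordS S s ∈ ordSet S s := by
  refine Nat.sSup_mem ?_ (ordSet_bddAbove S s)
  rcases eq_or_ne s 0 with rfl | hs0
  · exact ⟨0, finZeroElim, finZeroElim, by simp⟩
  · exact ⟨1, fun _ => s, fun _ => ⟨hs, hs0⟩, by simp⟩

theorem add_mem_ordSet {a b x y : ℕ} (ha : a ∈ ordSet S x) (hb : b ∈ ordSet S y) :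
    a + b ∈ ordSet S (x + y) := by
  obtain ⟨p, hp, rfl⟩ := ha
  obtain ⟨q, hq, rfl⟩ := hb
  refine ⟨Fin.append p q, fun j => ?_, ?_⟩
  · refine Fin.addCases (fun j => ?_) (fun j => ?_) j
    · simpa only [Fin.append_left] using hp j
    · simpa only [Fin.append_right] using hq j
  · simp only [Fin.sum_univ_add, Fin.append_left, Fin.append_right]

theorem mul_mem_ordSet (k : ℕ) {x : ℕ} (hx : x ∈ S) (hx0 : x ≠ 0) : k ∈ ordSet S (k * x) :=
  ⟨fun _ => x, fun _ => ⟨hx, hx0⟩, by simp⟩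

theorem ordS_add_ordS_le {a b : ℕ} (ha : a ∈ S) (hb : b ∈ S) :
    ordS S a + ordS S b ≤ ordS S (a + b) :=
  le_ordS (add_mem_ordSet (ordS_mem_ordSet ha) (ordS_mem_ordSet hb))

theorem predM_of_ordS_le {ω u t : ℕ} (hω : ω ∈ S) (hu : u ∈ S) (h : ω + u = t)
    (hle : ordS S t ≤ ordS S ω + ordS S u) : predM S ω t :=
  ⟨u, hu, h, le_antisymm (h ▸ ordS_add_ordS_le hω hu) hle⟩

end Order

section Exchange

variable {ι : Type*} [Fintype ι]

theorem mul_sq_lt_sum_mul_sq {g : ι → ℕ} (hg : Injective g) {ν : ι → ℕ} {i j : ι} {c : ℕ}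
    (hsum : ∑ k, ν k = c) (hlin : ∑ k, ν k * g k = c * g i) (hj : ν j ≠ 0) (hji : j ≠ i) :
    c * g i ^ 2 < ∑ k, ν k * g k ^ 2 := by
  have hpos : (0 : ℤ) < ∑ k, (ν k : ℤ) * ((g k : ℤ) - g i) ^ 2 := by
    refine sum_pos' (fun k _ => by positivity) ⟨j, mem_univ j, ?_⟩
    have : (g j : ℤ) - g i ≠ 0 := sub_ne_zero.2 (by exact_mod_cast hg.ne hji)
    positivity
  have hexpand : ∑ k, (ν k : ℤ) * ((g k : ℤ) - g i) ^ 2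
      = ∑ k, (ν k : ℤ) * g k ^ 2 - 2 * g i * ∑ k, (ν k : ℤ) * g k + g i ^ 2 * ∑ k, (ν k : ℤ) := by
    simp only [mul_sum, ← sum_sub_distrib, ← sum_add_distrib]
    exact sum_congr rfl fun k _ => by ring
  have hsum' : ∑ k, (ν k : ℤ) = c := by exact_mod_cast hsum
  have hlin' : ∑ k, (ν k : ℤ) * g k = c * g i := by exact_mod_cast hlin
  rw [hexpand, hsum', hlin'] at hpos
  have : ((c * g i ^ 2 : ℕ) : ℤ) < ((∑ k, ν k * g k ^ 2 : ℕ) : ℤ) := by push_cast; nlinarith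
  exact_mod_cast this

variable [DecidableEq ι]

theorem sum_single_mul (i : ι) (c : ℕ) (w : ι → ℕ) :
    ∑ j, (Pi.single i c : ι → ℕ) j * w j = c * w i := by
  simp [Pi.single_apply]

theorem sum_update_zero_mul_add (μ w : ι → ℕ) (i : ι) :
    ∑ j, update μ i 0 j * w j + μ i * w i = ∑ j, μ j * w j := by
  rw [← add_sum_erase _ _ (mem_univ i), ← add_sum_erase _ _ (mem_univ i), update_self, zero_mul,
    zero_add, add_comm]
  congr 1
  exact sum_congr rfl fun j hj => by rw [update_of_ne (ne_of_mem_erase hj)]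

theorem sum_exchange_mul (μ ν w : ι → ℕ) (i : ι) :
    ∑ j, (update μ i 0 + ν) j * w j + μ i * w i = ∑ j, μ j * w j + ∑ j, ν j * w j := by
  simp only [Pi.add_apply, add_mul, sum_add_distrib]
  rw [add_right_comm, sum_update_zero_mul_add]

end Exchange

section Generators

variable {S : Set ℕ} {ν : ℕ} {g : Fin ν → ℕ}

theorem Generates.sum_mem (hgen : Generates S g) (lam : Fin ν → ℕ) : ∑ i, lam i * g i ∈ S :=
  (hgen _).2 ⟨lam, rfl⟩

theorem Generates.mul_mem (hgen : Generates S g) (c : ℕ) (i : Fin ν) : c * g i ∈ S :=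
  sum_single_mul i c g ▸ hgen.sum_mem _

theorem Generates.add_mem (hgen : Generates S g) {a b : ℕ} (ha : a ∈ S) (hb : b ∈ S) :
    a + b ∈ S := by
  obtain ⟨lam, rfl⟩ := (hgen a).1 ha
  obtain ⟨κ, rfl⟩ := (hgen b).1 hb
  simpa only [Pi.add_apply, add_mul, sum_add_distrib] using hgen.sum_mem (lam + κ)

theorem Generates.sum_mem_ordSet (hgen : Generates S g) (hg : ∀ i, 0 < g i)
    (lam : Fin ν → ℕ) : ∑ i, lam i ∈ ordSet S (∑ i, lam i * g i) := by
  classical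
  suffices ∀ t : Finset (Fin ν), ∑ i ∈ t, lam i ∈ ordSet S (∑ i ∈ t, lam i * g i) from this univ
  intro t
  induction t using Finset.induction with
  | empty =>
    rw [sum_empty, sum_empty]
    exact ⟨finZeroElim, finZeroElim, by simp⟩
  | insert i t hi ih =>
    rw [sum_insert hi, sum_insert hi]
    exact add_mem_ordSet (mul_mem_ordSet _ (by simpa using hgen.mul_mem 1 i) (hg i).ne') ih

theorem Generates.sum_le_ordS (hgen : Generates S g) (hg : ∀ i, 0 < g i) (lam : Fin ν → ℕ) :
    ∑ i, lam i ≤ ordS S (∑ i, lam i * g i) :=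
  le_ordS (hgen.sum_mem_ordSet hg lam)

theorem Generates.exists_sum_mul_eq_of_mem_ordSet (hgen : Generates S g) {h s : ℕ}
    (hh : h ∈ ordSet S s) : ∃ lam : Fin ν → ℕ, ∑ i, lam i * g i = s ∧ h ≤ ∑ i, lam i := by
  obtain ⟨p, hp, rfl⟩ := hh
  induction h with
  | zero => exact ⟨0, by simp, by simp⟩
  | succ n ih =>
    obtain ⟨lam₁, hrep₁, hle₁⟩ := ih (fun j => p j.castSucc) fun j => hp _
    obtain ⟨lam₂, hrep₂⟩ := (hgen _).1 (hp (Fin.last n)).1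
    have hpos₂ : 1 ≤ ∑ i, lam₂ i := by
      refine Nat.one_le_iff_ne_zero.2 fun h0 => (hp (Fin.last n)).2 ?_
      rw [← hrep₂]
      exact sum_eq_zero fun i _ => by rw [sum_eq_zero_iff.1 h0 i (mem_univ i), zero_mul]
    refine ⟨lam₁ + lam₂, ?_, ?_⟩
    · simp only [Pi.add_apply, add_mul, sum_add_distrib, hrep₁, hrep₂, Fin.sum_univ_castSucc]
    · simp only [Pi.add_apply, sum_add_distrib]
      omega

theorem Generates.exists_isMaxRep (hgen : Generates S g) (hg : ∀ i, 0 < g i) {s : ℕ}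
    (hs : s ∈ S) : ∃ lam, IsMaxRep S g lam s := by
  obtain ⟨lam, hrep, hle⟩ := hgen.exists_sum_mul_eq_of_mem_ordSet (ordS_mem_ordSet hs)
  exact ⟨lam, hrep, le_antisymm (hrep ▸ hgen.sum_le_ordS hg lam) hle⟩

theorem Generates.exists_isMaxRep_forall_sum_mul_sq_le (hgen : Generates S g)
    (hg : ∀ i, 0 < g i) {s : ℕ} (hs : s ∈ S) :
    ∃ μ, IsMaxRep S g μ s ∧
      ∀ lam, IsMaxRep S g lam s → ∑ i, lam i * g i ^ 2 ≤ ∑ i, μ i * g i ^ 2 := by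
  have hfin : {lam | IsMaxRep S g lam s}.Finite := by
    refine (Set.finite_Iic fun _ => s).subset fun lam hlam i => ?_
    calc lam i ≤ lam i * g i := Nat.le_mul_of_pos_right _ (hg i)
      _ ≤ ∑ j, lam j * g j := single_le_sum (fun j _ => Nat.zero_le (lam j * g j)) (mem_univ i)
      _ = s := hlam.1
  exact Set.exists_max_image _ _ hfin (hgen.exists_isMaxRep hg hs)

theorem Generates.inApery_mul (hgen : Generates S g) {m : ℕ} {μ : Fin ν → ℕ}
    (h : InApery S m (∑ j, μ j * g j)) (i : Fin ν) : InApery S m (μ i * g i) := by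
  refine ⟨hgen.mul_mem _ _, fun u hu hum => h.2 (u + ∑ j, update μ i 0 j * g j)
    (hgen.add_mem hu (hgen.sum_mem _)) ?_⟩
  rw [← sum_update_zero_mul_add μ g i]
  omega

end Generators

section MaxRep

variable {S : Set ℕ} {ν : ℕ} {g : Fin ν → ℕ} {μ : Fin ν → ℕ} {s : ℕ}

theorem IsMaxRep.exchange (hμ : IsMaxRep S g μ s) {ν' : Fin ν → ℕ} {i : Fin ν}
    (hν' : ∑ j, ν' j * g j = μ i * g i) :
    ∑ j, (update μ i 0 + ν') j * g j = s ∧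
      ∑ j, (update μ i 0 + ν') j + μ i = ordS S s + ∑ j, ν' j := by
  have hrep := sum_exchange_mul μ ν' g i
  have hlen := sum_exchange_mul μ ν' (fun _ => 1) i
  simp only [mul_one] at hlen
  rw [hμ.1, hν'] at hrep
  rw [hμ.2] at hlen
  exact ⟨Nat.add_right_cancel hrep, hlen⟩

theorem IsMaxRep.sum_le (hμ : IsMaxRep S g μ s) (hgen : Generates S g) (hg : ∀ i, 0 < g i)
    {ν' : Fin ν → ℕ} {i : Fin ν} (hν' : ∑ j, ν' j * g j = μ i * g i) : ∑ j, ν' j ≤ μ i := by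
  obtain ⟨hrep, hlen⟩ := hμ.exchange hν'
  have := hrep ▸ hgen.sum_le_ordS hg (update μ i 0 + ν')
  omega

theorem IsMaxRep.ordS_mul (hμ : IsMaxRep S g μ s) (hgen : Generates S g) (hg : ∀ i, 0 < g i)
    (i : Fin ν) : ordS S (μ i * g i) = μ i := by
  obtain ⟨ν', hν'⟩ := hgen.exists_isMaxRep hg (hgen.mul_mem (μ i) i)
  refine le_antisymm (hν'.2 ▸ hμ.sum_le hgen hg hν'.1) ?_
  simpa [sum_single_mul] using hgen.sum_le_ordS hg (Pi.single i (μ i))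

theorem IsMaxRep.uniqueMaxRep_mul (hμ : IsMaxRep S g μ s) (hgen : Generates S g)
    (hg : ∀ i, 0 < g i) (hinj : Injective g)
    (hmax : ∀ lam, IsMaxRep S g lam s → ∑ j, lam j * g j ^ 2 ≤ ∑ j, μ j * g j ^ 2)
    (i : Fin ν) : UniqueMaxRep S g (μ i * g i) := by
  have hord := hμ.ordS_mul hgen hg i
  refine ⟨Pi.single i (μ i), ⟨sum_single_mul i _ g, by simp [hord]⟩, fun ν' hν' => ?_⟩
  have hsum : ∑ j, ν' j = μ i := hν'.2.trans hord
  have hsupp : ∀ j ≠ i, ν' j = 0 := by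
    intro j hji
    by_contra hj
    have hlt := mul_sq_lt_sum_mul_sq hinj hsum hν'.1 hj hji
    obtain ⟨hrep, hlen⟩ := hμ.exchange hν'.1
    have hle := hmax _ ⟨hrep, by omega⟩
    have hsq := sum_exchange_mul μ ν' (fun j => g j ^ 2) i
    linarith
  funext j
  by_cases hji : j = i
  · subst hji
    rw [Pi.single_eq_same, ← hsum, Fintype.sum_eq_single j hsupp]
  · rw [Pi.single_eq_of_ne hji, hsupp j hji]

end MaxRep

section Apery

variable {S : Set ℕ} {m f : ℕ}

theorem inApery_frobenius_add (hf : f ∉ S) (hfmax : ∀ n, f < n → n ∈ S) (hm : 0 < m) :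
    InApery S m (f + m) :=
  ⟨hfmax _ (by omega), fun u hu h => hf (by rwa [Nat.add_right_cancel h] at hu)⟩

theorem InApery.le_frobenius_add (hfmax : ∀ n, f < n → n ∈ S) {x : ℕ} (hx : InApery S m x) :
    x ≤ f + m := by
  by_contra! h
  exact hx.2 (x - m) (hfmax _ (by omega)) (by omega)

variable {ν : ℕ} {g : Fin ν → ℕ}

theorem le_gammaN (hfmax : ∀ n, f < n → n ∈ S) {i : Fin ν} (hgi : 0 < g i) {h : ℕ}
    (hap : InApery S m (h * g i)) (hord : ordS S (h * g i) = h)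
    (huniq : UniqueMaxRep S g (h * g i)) : h ≤ gammaN S m g i :=
  le_csSup ⟨f + m, fun k hk => (Nat.le_mul_of_pos_right k hgi).trans (hk.1.le_frobenius_add hfmax)⟩
    ⟨hap, hord, huniq⟩

theorem Generates.gammaN_zero [NeZero ν] (hgen : Generates S g) : gammaN S (g 0) g 0 = 0 := by
  refine Nat.le_zero.1 (csSup_le' fun h hh => ?_)
  rcases h with _ | k
  · exact le_rfl
  · exact (hh.1.2 _ (hgen.mul_mem k 0) (Nat.succ_mul k (g 0)).symm).elim

theorem Generates.ordS_le_sum_gammaN (hgen : Generates S g) (hg : ∀ i, 0 < g i)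
    (hinj : Injective g) (hfmax : ∀ n, f < n → n ∈ S) {t : ℕ} (ht : InApery S m t) :
    ordS S t ≤ ∑ i, gammaN S m g i := by
  obtain ⟨μ, hμ, hmax⟩ := hgen.exists_isMaxRep_forall_sum_mul_sq_le hg ht.1
  rw [← hμ.2]
  exact sum_le_sum fun i _ => le_gammaN hfmax (hg i) (hgen.inApery_mul (hμ.1 ▸ ht) i)
    (hμ.ordS_mul hgen hg i) (hμ.uniqueMaxRep_mul hgen hg hinj hmax i)

theorem Generates.frobenius_add_eq_sum_gammaN [NeZero ν] (hgen : Generates S g)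
    (hg : ∀ i, 0 < g i) (hf : f ∉ S) (hfmax : ∀ n, f < n → n ∈ S)
    (hrect : AperySet S (g 0) = GammaSet S (g 0) g) :
    f + g 0 = ∑ i, gammaN S (g 0) g i * g i := by
  obtain ⟨lam, -, hle, hlam⟩ : f + g 0 ∈ GammaSet S (g 0) g :=
    hrect ▸ inApery_frobenius_add hf hfmax (hg 0)
  have hγ : ∑ i, gammaN S (g 0) g i * g i ∈ AperySet S (g 0) :=
    hrect ▸ ⟨_, hgen.gammaN_zero, fun _ => le_rfl, rfl⟩
  refine le_antisymm ?_ (InApery.le_frobenius_add hfmax hγ)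
  rw [← hlam]
  exact sum_le_sum fun i _ => Nat.mul_le_mul_right _ (hle i)

end Apery

theorem gammaRect_Mpure_symmetric_general (S : Set ℕ) {ν : ℕ} [NeZero ν] (g : Fin ν → ℕ)
    (hgen : MinimalGen S g) (hmono : StrictMono g)
    (hmpos : 0 < g 0)
    (f : ℕ) (hf : f ∉ S) (hfmax : ∀ n, f < n → n ∈ S)
    (hrect : AperySet S (g 0) = GammaSet S (g 0) g) :
    ∀ ω, InApery S (g 0) ω → predM S ω (f + g 0) := by
  intro ω hω
  obtain ⟨hgen, -⟩ := hgen
  have hg : ∀ i, 0 < g i := fun i => hmpos.trans_le (hmono.monotone (Fin.zero_le i))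
  set γ := gammaN S (g 0) g
  have hfrob : f + g 0 = ∑ i, γ i * g i := hgen.frobenius_add_eq_sum_gammaN hg hf hfmax hrect
  have hord : ordS S (f + g 0) ≤ ∑ i, γ i :=
    hgen.ordS_le_sum_gammaN hg hmono.injective hfmax (inApery_frobenius_add hf hfmax hmpos)
  obtain ⟨lam, -, hle, rfl⟩ : ω ∈ GammaSet S (g 0) g := hrect ▸ hω
  refine predM_of_ordS_le (hgen.sum_mem lam) (hgen.sum_mem (γ - lam)) ?_ ?_
  · rw [hfrob, ← sum_add_distrib]
    exact sum_congr rfl fun i _ => by rw [Pi.sub_apply, ← add_mul, Nat.add_sub_cancel' (hle i)]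
  · calc ordS S (f + g 0) ≤ ∑ i, γ i := hord
      _ = ∑ i, lam i + ∑ i, (γ - lam) i := by
        rw [← sum_add_distrib]
        exact sum_congr rfl fun i _ => (Nat.add_sub_cancel' (hle i)).symm
      _ ≤ _ := add_le_add (hgen.sum_le_ordS hg lam) (hgen.sum_le_ordS hg _)

theorem gammaRect_Mpure_symmetric (S : Set ℕ) {ν : ℕ} [NeZero ν] (g : Fin ν → ℕ) (hν : 2 ≤ ν)
    (hS : IsNumSgp S) (hgen : MinimalGen S g) (hmono : StrictMono g)
    (hmpos : 0 < g 0) (hmul : ∀ s ∈ S, s ≠ 0 → g 0 ≤ s)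
    (f : ℕ) (hf : f ∉ S) (hfmax : ∀ n, f < n → n ∈ S)
    (hrect : AperySet S (g 0) = GammaSet S (g 0) g) :
    ∀ ω, InApery S (g 0) ω → predM S ω (f + g 0) :=
  gammaRect_Mpure_symmetric_general S g hgen hmono hmpos f hf hfmax hrect
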